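/- Let G and H be edgeless finite simple graphs on disjoint vertex sets of cardinalities n₁ ≥ 1 and n₂ ≥ 1, respectively. Then the join G ∨ H is well-f-covered if and only if n₁ = n₂ or n₁ = 1 or n₂ = 1. -/

import Mathlib

/-!
In the complete bipartite graph `K_{n₁,n₂}` a vertex set induces a forest iff it meets one side
in at most one vertex: two vertices on each side span a 4-cycle, and otherwise the induced graph
is a star. Maximality then only depends on how many vertices are taken on each side, so the
maximal induced forests are "one side plus one vertex of the other", of sizes `n₁ + 1` and
`n₂ + 1`, unless a side has a single vertex, in which case the whole graph is a star.
-/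

/-- `X` induces a forest in `G`: the subgraph induced by `X` is acyclic. -/
def IsInducedForest {V : Type*} (G : SimpleGraph V) (X : Finset V) : Prop :=
  (G.induce (X : Set V)).IsAcyclic

/-- `X` is a maximal induced forest of `G`. -/
def IsMaximalInducedForest {V : Type*} (G : SimpleGraph V) (X : Finset V) : Prop :=
  IsInducedForest G X ∧ ∀ Y : Finset V, X ⊂ Y → ¬ IsInducedForest G Y

/-- The forest number of `G`: maximum cardinality of an induced forest. -/
noncomputable def forestNum {V : Type*} (G : SimpleGraph V) : ℕ :=
  sSup {n | ∃ X : Finset V, IsInducedForest G X ∧ X.card = n}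

/-- `G` is well-f-covered: all maximal induced forests have the same cardinality. -/
def WellFCovered {V : Type*} (G : SimpleGraph V) : Prop :=
  ∀ X Y : Finset V, IsMaximalInducedForest G X → IsMaximalInducedForest G Y →
    X.card = Y.card

def IsIndepFinset {V : Type*} (G : SimpleGraph V) (X : Finset V) : Prop :=
  ∀ ⦃u⦄, u ∈ X → ∀ ⦃v⦄, v ∈ X → ¬ G.Adj u v

def IsMaximalIndepSet {V : Type*} (G : SimpleGraph V) (X : Finset V) : Prop :=
  IsIndepFinset G X ∧ ∀ Y : Finset V, X ⊂ Y → ¬ IsIndepFinset G Y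

noncomputable def indepNum {V : Type*} (G : SimpleGraph V) : ℕ :=
  sSup {n | ∃ X : Finset V, IsIndepFinset G X ∧ X.card = n}

def WellCovered {V : Type*} (G : SimpleGraph V) : Prop :=
  ∀ X Y : Finset V, IsMaximalIndepSet G X → IsMaximalIndepSet G Y → X.card = Y.card

/-- The join of two graphs on disjoint vertex sets. -/
def joinGraph {V W : Type*} (G : SimpleGraph V) (H : SimpleGraph W) :
    SimpleGraph (V ⊕ W) where
  Adj a b :=
    match a, b with
    | Sum.inl u, Sum.inl v => G.Adj u v
    | Sum.inr u, Sum.inr v => H.Adj u v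
    | Sum.inl _, Sum.inr _ => True
    | Sum.inr _, Sum.inl _ => True
  symm := ⟨by rintro (u|u) (v|v) h <;> first | exact h.symm | trivial⟩
  loopless := ⟨by rintro (u|u) h <;> exact SimpleGraph.irrefl _ h⟩

open Finset SimpleGraph

lemma Finset.forall_notMem_card_insert_iff {α : Type*} [Fintype α] [DecidableEq α]
    {s : Finset α} {P : ℕ → Prop} :
    (∀ a ∉ s, P #(insert a s)) ↔ (#s < Fintype.card α → P (#s + 1)) := by
  refine ⟨fun h hs => ?_, fun h a ha => ?_⟩
  · obtain ⟨a, -, ha⟩ :=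
      exists_of_ssubset (ssubset_univ_iff.mpr ((card_lt_iff_ne_univ s).mp hs))
    simpa [card_insert_of_notMem ha] using h a ha
  · rw [card_insert_of_notMem ha]
    exact h (card_lt_univ_of_notMem ha)

namespace SimpleGraph

variable {V : Type*} {G : SimpleGraph V}

lemma isBridge_of_forall_adj_eq {v w : V} (hvw : G.Adj v w) (hleaf : ∀ u, G.Adj v u → u = w) :
    G.IsBridge s(v, w) := by
  rw [isBridge_iff_forall_walk_mem_edges]
  rintro (_ | ⟨hvu, _⟩)
  · exact absurd rfl hvw.ne
  · simp [hleaf _ hvu]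

lemma IsVertexCover.isAcyclic {c : Set V} (hc : G.IsVertexCover c) (hs : c.Subsingleton) :
    G.IsAcyclic := by
  have leaf : ∀ ⦃v w⦄, G.Adj v w → w ∈ c → ∀ u, G.Adj v u → u = w :=
    fun v w hvw hw u hvu =>
      (hc hvu).elim (fun hv => absurd (hs hv hw) hvw.ne) (fun hu => hs hu hw)
  refine isAcyclic_iff_forall_adj_isBridge.mpr fun v w hvw => ?_
  rcases hc hvw with hv | hw
  · rw [Sym2.eq_swap]
    exact isBridge_of_forall_adj_eq hvw.symm (leaf hvw.symm hv)
  · exact isBridge_of_forall_adj_eq hvw (leaf hvw hw)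

lemma IsAcyclic.subsingleton_commonNeighbors (hG : G.IsAcyclic) {v w : V} (hvw : v ≠ w) :
    (G.commonNeighbors v w).Subsingleton := by
  let path (x : V) (hx : G.Adj v x ∧ G.Adj w x) : G.Path v w :=
    ⟨.cons hx.1 (.cons hx.2.symm .nil), by simp [hx.1.ne, hx.2.ne', hvw]⟩
  intro a ha b hb
  have hab := (hG.subsingleton_path v w).elim (path a (G.mem_commonNeighbors.mp ha))
    (path b (G.mem_commonNeighbors.mp hb))
  simpa [path] using congrArg (·.1.support) hab

end SimpleGraph

section InducedForest

variable {V : Type*} {G : SimpleGraph V}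

lemma IsInducedForest.subset {X Y : Finset V} (hY : IsInducedForest G Y) (hXY : X ⊆ Y) :
    IsInducedForest G X :=
  hY.embedding (G.induceHomOfLE (coe_subset.mpr hXY))

lemma isMaximalInducedForest_iff_forall_insert [DecidableEq V] {X : Finset V} :
    IsMaximalInducedForest G X ↔
      IsInducedForest G X ∧ ∀ v ∉ X, ¬ IsInducedForest G (insert v X) := by
  rw [← Finset.maximal_iff_forall_insert fun _ _ hY hXY => hY.subset hXY, maximal_iff_forall_gt]
  rfl

end InducedForest

section Join

variable {V W : Type*}

lemma isInducedForest_joinGraph_bot_iff (X : Finset (V ⊕ W)) :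
    IsInducedForest (joinGraph (⊥ : SimpleGraph V) (⊥ : SimpleGraph W)) X ↔
      #X.toLeft ≤ 1 ∨ #X.toRight ≤ 1 := by
  constructor
  · intro hX
    by_contra! h
    obtain ⟨a, ha, a', ha', haa'⟩ := one_lt_card.mp h.1
    obtain ⟨b, hb, b', hb', hbb'⟩ := one_lt_card.mp h.2
    rw [mem_toLeft] at ha ha'
    rw [mem_toRight] at hb hb'
    have hcommon : ∀ (c : W) (hc : .inr c ∈ X), (⟨.inr c, hc⟩ : (X : Set (V ⊕ W))) ∈
        (induce X (joinGraph ⊥ ⊥)).commonNeighbors ⟨.inl a, ha⟩ ⟨.inl a', ha'⟩ :=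
      fun _ _ => (mem_commonNeighbors _).mpr ⟨trivial, trivial⟩
    have hbb :=
      hX.subsingleton_commonNeighbors (by simpa using haa') (hcommon b hb) (hcommon b' hb')
    exact hbb' (by simpa using hbb)
  · rintro (h | h)
    · refine IsVertexCover.isAcyclic (c := {x | x.1.isLeft}) ?_ ?_
      · rintro ⟨a | a, _⟩ ⟨b | b, _⟩ hab <;> simp_all [joinGraph]
      · rintro ⟨a | a, ha⟩ hx ⟨b | b, hb⟩ hy
        case inl.inl =>
          simpa using card_le_one.mp h a (mem_toLeft.mpr ha) b (mem_toLeft.mpr hb)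
        all_goals simp at hx hy
    · refine IsVertexCover.isAcyclic (c := {x | x.1.isRight}) ?_ ?_
      · rintro ⟨a | a, _⟩ ⟨b | b, _⟩ hab <;> simp_all [joinGraph]
      · rintro ⟨a | a, ha⟩ hx ⟨b | b, hb⟩ hy
        case inr.inr =>
          simpa using card_le_one.mp h a (mem_toRight.mpr ha) b (mem_toRight.mpr hb)
        all_goals simp at hx hy

lemma isMaximalInducedForest_joinGraph_bot_iff [Fintype V] [Fintype W] [DecidableEq V]
    [DecidableEq W] (X : Finset (V ⊕ W)) :
    IsMaximalInducedForest (joinGraph (⊥ : SimpleGraph V) (⊥ : SimpleGraph W)) X ↔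
      (#X.toLeft ≤ 1 ∨ #X.toRight ≤ 1) ∧
      (#X.toLeft < Fintype.card V → ¬ (#X.toLeft + 1 ≤ 1 ∨ #X.toRight ≤ 1)) ∧
      (#X.toRight < Fintype.card W → ¬ (#X.toLeft ≤ 1 ∨ #X.toRight + 1 ≤ 1)) := by
  simp only [isMaximalInducedForest_iff_forall_insert, isInducedForest_joinGraph_bot_iff,
    Sum.forall, ← mem_toLeft, ← mem_toRight, toLeft_insert_inl, toRight_insert_inl,
    toLeft_insert_inr, toRight_insert_inr]
  rw [forall_notMem_card_insert_iff (P := fun n => ¬ (n ≤ 1 ∨ #X.toRight ≤ 1)),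
    forall_notMem_card_insert_iff (P := fun n => ¬ (#X.toLeft ≤ 1 ∨ n ≤ 1))]

end Join

/-- Let `G` and `H` be edgeless graphs on disjoint vertex sets of
cardinalities `n₁ ≥ 1` and `n₂ ≥ 1`. Then the join `G ∨ H` is well-f-covered iff
`n₁ = n₂` or `n₁ = 1` or `n₂ = 1`. -/
theorem stmt18 {V W : Type*} [Fintype V] [Fintype W] (n₁ n₂ : ℕ)
    (h1 : 1 ≤ n₁) (h2 : 1 ≤ n₂) (hV : Fintype.card V = n₁) (hW : Fintype.card W = n₂) :
    WellFCovered (joinGraph (⊥ : SimpleGraph V) (⊥ : SimpleGraph W)) ↔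
      (n₁ = n₂ ∨ n₁ = 1 ∨ n₂ = 1) := by
  classical
  subst hV hW
  simp only [WellFCovered, isMaximalInducedForest_joinGraph_bot_iff]
  constructor
  · intro hwf
    by_contra! h
    obtain ⟨v⟩ : Nonempty V := Fintype.card_pos_iff.mp h1
    obtain ⟨w⟩ : Nonempty W := Fintype.card_pos_iff.mp h2
    have hcard := hwf (univ.disjSum {w}) (({v} : Finset V).disjSum univ)
      (by simp only [toLeft_disjSum, toRight_disjSum, card_univ, card_singleton]; omega)
      (by simp only [toLeft_disjSum, toRight_disjSum, card_univ, card_singleton]; omega)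
    simp only [card_disjSum, card_univ, card_singleton] at hcard
    omega
  · intro h X Y hX hY
    rw [← card_toLeft_add_card_toRight, ← card_toLeft_add_card_toRight]
    have := X.toLeft.card_le_univ; have := X.toRight.card_le_univ
    have := Y.toLeft.card_le_univ; have := Y.toRight.card_le_univ
    omega
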